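/- arXiv:1510.02029 — 3 statements merged into one kernel-verified Lean document; each statement's English description precedes it below -/
import Mathlib

section
/- Let n ≥ 1, d ≥ 2, s ≥ 2, and let U = ℂ^{n+1}. (i) If (2n+1)s ≤ C(n+d,d) and there exist ℓ_1, m_1, …, ℓ_s, m_s ∈ U with dim_ℂ Σ_{i=1}^s (ℓ_i^{d−1}·U + ℓ_i^{d−2}·m_i·U) = (2n+1)s, then there exist ℓ_1', m_1', …, ℓ_{s−1}', m_{s−1}' ∈ U with dim_ℂ Σ_{i=1}^{s−1} (ℓ_i'^{d−1}·U + ℓ_i'^{d−2}·m_i'·U) = (2n+1)(s−1). (ii) If (2n+1)s ≥ C(n+d,d) and there exist ℓ_1, m_1, …, ℓ_s, m_s ∈ U with Σ_{i=1}^s (ℓ_i^{d−1}·U + ℓ_i^{d−2}·m_i·U) equal to the full space of degree-d forms, then there exist s+1 such pairs whose associated sum is again the full space of degree-d forms. (These assert that truth of a subabundant statement T(n,d;s) implies truth of T(n,d;s−1), and truth of a superabundant statement T(n,d;s) implies truth of T(n,d;s+1).) -/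
open MvPolynomial

/-- The linear form associated with a coefficient vector `v ∈ ℂ^{n+1}`. -/
noncomputable def lin {n : ℕ} (v : Fin (n + 1) → ℂ) : MvPolynomial (Fin (n + 1)) ℂ :=
  ∑ j, MvPolynomial.C (v j) * MvPolynomial.X j

/-- The subspace `f·U = {f·u : u ∈ U}` of the polynomial ring, where `U` is the
space of linear forms. -/
noncomputable def mulU {n : ℕ} (f : MvPolynomial (Fin (n + 1)) ℂ) :
    Submodule ℂ (MvPolynomial (Fin (n + 1)) ℂ) :=
  Submodule.span ℂ (Set.range fun j : Fin (n + 1) => f * MvPolynomial.X j)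

/-- The affine cone `ℓ^{d-1}·U + ℓ^{d-2}·m·U` over the tangent space to the tangential
variety `T_{n,d}` of the `d`-th Veronese variety at the point `[ℓ^{d-1} m]`. -/
noncomputable def tanCone {n : ℕ} (d : ℕ) (ℓ m : Fin (n + 1) → ℂ) :
    Submodule ℂ (MvPolynomial (Fin (n + 1)) ℂ) :=
  mulU (lin ℓ ^ (d - 1)) ⊔ mulU (lin ℓ ^ (d - 2) * lin m)

/-- `v ∈ U_{i+1}`, i.e. the coordinates of `v` indexed by `{24i, …, 24i+23}` vanish. -/
def memU {n : ℕ} (i : Fin 3) (v : Fin (n + 1) → ℂ) : Prop :=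
  ∀ j : Fin (n + 1), 24 * (i : ℕ) ≤ (j : ℕ) → (j : ℕ) < 24 * (i : ℕ) + 24 → v j = 0

/-- `S_3(U_{i+1})`: the span of all products of three linear forms belonging to `U_{i+1}`. -/
noncomputable def S3U {n : ℕ} (i : Fin 3) : Submodule ℂ (MvPolynomial (Fin (n + 1)) ℂ) :=
  Submodule.span ℂ
    {p | ∃ a b c : Fin (n + 1) → ℂ,
      memU i a ∧ memU i b ∧ memU i c ∧ p = lin a * lin b * lin c}

/-- `v ∈ U_K`, the span of the variables `x_0, …, x_71`. -/
def memK {n : ℕ} (v : Fin (n + 1) → ℂ) : Prop :=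
  ∀ j : Fin (n + 1), 72 ≤ (j : ℕ) → v j = 0

/-- `S_3(U_K)`: the span of all products of three linear forms in `x_0, …, x_71`. -/
noncomputable def S3K (n : ℕ) : Submodule ℂ (MvPolynomial (Fin (n + 1)) ℂ) :=
  Submodule.span ℂ
    {p | ∃ a b c : Fin (n + 1) → ℂ,
      memK a ∧ memK b ∧ memK c ∧ p = lin a * lin b * lin c}

/-- The alternating sum `Σ_{j=1}^k (−1)^{j−1} C(k,j) · C(n−24j+3, 3)` (with the convention
`C(m,3) = 0` for `m < 3`, realized by truncated subtraction `n+3−24j`). -/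
def altsum (n k : ℕ) : ℤ :=
  ∑ j ∈ Finset.Icc 1 k, (-1 : ℤ) ^ (j - 1) * (k.choose j : ℤ) * ((n + 3 - 24 * j).choose 3 : ℤ)

/-- `k = #{i : a_i ≠ 0}`. -/
def kcount (a : Fin 3 → ℕ) : ℕ := (Finset.univ.filter fun i => a i ≠ 0).card

/-- The expected dimension `w(n, s; a_1, a_2, a_3)`, as an integer. -/
def expdimZ (n s : ℕ) (a : Fin 3 → ℕ) : ℤ :=
  min (altsum n (kcount a) + 48 * ((a 0 + a 1 + a 2 : ℕ) : ℤ) + (2 * n + 1) * s)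
    (((n + 3).choose 3 : ℤ))

/-- The subspace `W(n, s; a_1, a_2, a_3)` determined by the given points. -/
noncomputable def Wspace {n s : ℕ} {a : Fin 3 → ℕ}
    (ℓ m : Fin s → Fin (n + 1) → ℂ)
    (ℓ' m' : (i : Fin 3) → Fin (a i) → Fin (n + 1) → ℂ) :
    Submodule ℂ (MvPolynomial (Fin (n + 1)) ℂ) :=
  (⨆ i : {i : Fin 3 // a i ≠ 0},
      (S3U i.1 ⊔ ⨆ j : Fin (a i.1), tanCone 3 (ℓ' i.1 j) (m' i.1 j)))
    ⊔ ⨆ i : Fin s, tanCone 3 (ℓ i) (m i)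

/-- The statement `T(n, s; a_1, a_2, a_3)`: some choice of points realizes the expected
dimension `w(n, s; a_1, a_2, a_3)`. -/
def TStmt (n s : ℕ) (a : Fin 3 → ℕ) : Prop :=
  ∃ (ℓ m : Fin s → Fin (n + 1) → ℂ)
    (ℓ' m' : (i : Fin 3) → Fin (a i) → Fin (n + 1) → ℂ),
    (∀ (i : Fin 3) (j : Fin (a i)), memU i (ℓ' i j) ∧ memU i (m' i j)) ∧
    (Module.finrank ℂ (Wspace ℓ m ℓ' m') : ℤ) = expdimZ n s a

/-- `s_1(n) = 48k² + (11+4r)k + ⌊(4r²+22r+33)/48⌋` where `n = 24k + r`. -/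
def s1 (n : ℕ) : ℕ :=
  48 * (n / 24) ^ 2 + (11 + 4 * (n % 24)) * (n / 24) +
    (4 * (n % 24) ^ 2 + 22 * (n % 24) + 33) / 48

/-- `s_2(n) = s_1(n) + 1`. -/
def s2 (n : ℕ) : ℕ := s1 n + 1

/-- `t(n) = 4n − 37`. -/
def tfun (n : ℕ) : ℕ := 4 * n - 37

/-- The expected codimension `c(n)` of `W(n, t(n); s_1(n−24), 0, 0)`. -/
def cInt (n : ℕ) : ℤ :=
  ((n + 3).choose 3 : ℤ) - ((n - 21).choose 3 : ℤ) - (tfun n : ℤ) * (2 * n + 1) -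
    48 * (s1 (n - 24) : ℤ)

/-! Each cone `ℓ^{d-1}·U + ℓ^{d-2}·m·U` has dimension at most `2n+1`: its two summands have
dimension at most `n+1` and, unless one of them is zero, share the nonzero form `ℓ^{d-1}m`.
Hence if `s` cones span a space of dimension `(2n+1)s`, the first `s-1` of them span one of
dimension `(2n+1)(s-1)`. In the superabundant case, repeating one of the `s` pairs gives `s+1`
pairs spanning the same space. -/

theorem iSup_fin_succ_eq_iSup_castSucc_sup_last {k : ℕ} {α : Type*} [CompleteLattice α]
    (p : Fin (k + 1) → α) :
    ⨆ i, p i = (⨆ i : Fin k, p i.castSucc) ⊔ p (Fin.last k) := by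
  refine le_antisymm (iSup_le fun i => ?_) (sup_le (iSup_le fun i => le_iSup p _) (le_iSup p _))
  induction i using Fin.lastCases with
  | last => exact le_sup_right
  | cast i => exact le_sup_of_le_left (le_iSup (fun j : Fin k => p j.castSucc) i)

section FinrankSup

variable {K V : Type*} [Field K] [AddCommGroup V] [Module K V]

theorem finrank_sup_add_one_le {A B : Submodule K V} [FiniteDimensional K A]
    [FiniteDimensional K B] (h : A ⊓ B ≠ ⊥) :
    Module.finrank K ↥(A ⊔ B) + 1 ≤ Module.finrank K A + Module.finrank K B := by
  have hpos : 1 ≤ Module.finrank K ↥(A ⊓ B) := Submodule.one_le_finrank_iff.mpr h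
  have := Submodule.finrank_sup_add_finrank_inf_eq A B
  omega

theorem finrank_iSup_le_mul {k c : ℕ} (p : Fin k → Submodule K V)
    [∀ i, FiniteDimensional K (p i)] (hp : ∀ i, Module.finrank K (p i) ≤ c) :
    Module.finrank K ↥(⨆ i, p i) ≤ c * k := by
  induction k with
  | zero => simp
  | succ k ih =>
    rw [iSup_fin_succ_eq_iSup_castSucc_sup_last]
    have hinit := ih (fun i => p i.castSucc) fun i => hp _
    have hlast := hp (Fin.last k)
    have := Submodule.finrank_add_le_finrank_add_finrank (⨆ i : Fin k, p i.castSucc)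
      (p (Fin.last k))
    rw [Nat.mul_succ]
    omega

theorem finrank_iSup_castSucc_eq {k c : ℕ} (p : Fin (k + 1) → Submodule K V)
    [∀ i, FiniteDimensional K (p i)] (hp : ∀ i, Module.finrank K (p i) ≤ c)
    (hsup : Module.finrank K ↥(⨆ i, p i) = c * (k + 1)) :
    Module.finrank K ↥(⨆ i : Fin k, p i.castSucc) = c * k := by
  rw [iSup_fin_succ_eq_iSup_castSucc_sup_last] at hsup
  have hinit := finrank_iSup_le_mul (fun i => p i.castSucc) fun i => hp _
  have hlast := hp (Fin.last k)
  have := Submodule.finrank_add_le_finrank_add_finrank (⨆ i : Fin k, p i.castSucc)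
    (p (Fin.last k))
  rw [Nat.mul_succ] at hsup
  omega

end FinrankSup

section TangentCone

variable {n : ℕ}

instance (f : MvPolynomial (Fin (n + 1)) ℂ) : FiniteDimensional ℂ (mulU f) :=
  FiniteDimensional.span_of_finite ℂ (Set.finite_range _)

instance (d : ℕ) (ℓ m : Fin (n + 1) → ℂ) : FiniteDimensional ℂ (tanCone d ℓ m) := by
  unfold tanCone; infer_instance

theorem mulU_zero : mulU (0 : MvPolynomial (Fin (n + 1)) ℂ) = ⊥ := by
  simp [mulU]

theorem finrank_mulU_le (f : MvPolynomial (Fin (n + 1)) ℂ) :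
    Module.finrank ℂ (mulU f) ≤ n + 1 :=
  (finrank_range_le_card _).trans_eq (Fintype.card_fin _)

theorem mul_lin_mem_mulU (f : MvPolynomial (Fin (n + 1)) ℂ) (v : Fin (n + 1) → ℂ) :
    f * lin v ∈ mulU f := by
  rw [lin, Finset.mul_sum]
  refine Submodule.sum_mem _ fun j _ => ?_
  rw [mul_left_comm, ← MvPolynomial.smul_eq_C_mul]
  exact Submodule.smul_mem _ _ (Submodule.subset_span ⟨j, rfl⟩)

theorem finrank_tanCone_le {d : ℕ} (hd : 2 ≤ d) (ℓ m : Fin (n + 1) → ℂ) :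
    Module.finrank ℂ (tanCone d ℓ m) ≤ 2 * n + 1 := by
  have hA := finrank_mulU_le (lin ℓ ^ (d - 1))
  have hB := finrank_mulU_le (lin ℓ ^ (d - 2) * lin m)
  have hsup := Submodule.finrank_add_le_finrank_add_finrank
    (mulU (lin ℓ ^ (d - 1))) (mulU (lin ℓ ^ (d - 2) * lin m))
  by_cases hℓ : lin ℓ = 0
  · have hpow : lin ℓ ^ (d - 1) = 0 := by rw [hℓ, zero_pow (by omega)]
    rw [tanCone, hpow, mulU_zero, bot_sup_eq]
    omega
  by_cases hm : lin m = 0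
  · rw [tanCone, hm, mul_zero, mulU_zero, sup_bot_eq]
    omega
  have hcommon : lin ℓ ^ (d - 1) * lin m = lin ℓ ^ (d - 2) * lin m * lin ℓ := by
    rw [show d - 1 = d - 2 + 1 by omega, pow_succ]; ring
  have hinf : mulU (lin ℓ ^ (d - 1)) ⊓ mulU (lin ℓ ^ (d - 2) * lin m) ≠ ⊥ :=
    Submodule.ne_bot_iff _ |>.mpr ⟨_, ⟨mul_lin_mem_mulU _ m, hcommon ▸ mul_lin_mem_mulU _ ℓ⟩,
      mul_ne_zero (pow_ne_zero _ hℓ) hm⟩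
  have := finrank_sup_add_one_le hinf
  rw [tanCone]
  omega

end TangentCone

theorem sub_super_abundant_monotone_general (n d s : ℕ) (hd : 2 ≤ d) (hs : 2 ≤ s) :
    (((2 * n + 1) * s ≤ (n + d).choose d →
      (∃ ℓ m : Fin s → Fin (n + 1) → ℂ,
        Module.finrank ℂ ↥(⨆ i, tanCone d (ℓ i) (m i)) = (2 * n + 1) * s) →
      ∃ ℓ m : Fin (s - 1) → Fin (n + 1) → ℂ,
        Module.finrank ℂ ↥(⨆ i, tanCone d (ℓ i) (m i)) = (2 * n + 1) * (s - 1))) ∧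
    (((n + d).choose d ≤ (2 * n + 1) * s →
      (∃ ℓ m : Fin s → Fin (n + 1) → ℂ,
        (⨆ i, tanCone d (ℓ i) (m i)) = MvPolynomial.homogeneousSubmodule (Fin (n + 1)) ℂ d) →
      ∃ ℓ m : Fin (s + 1) → Fin (n + 1) → ℂ,
        (⨆ i, tanCone d (ℓ i) (m i)) =
          MvPolynomial.homogeneousSubmodule (Fin (n + 1)) ℂ d)) := by
  obtain ⟨k, rfl⟩ : ∃ k, s = k + 1 := ⟨s - 1, by omega⟩
  constructor
  · rintro - ⟨ℓ, m, hdim⟩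
    rw [Nat.add_sub_cancel]
    exact ⟨fun i => ℓ i.castSucc, fun i => m i.castSucc,
      finrank_iSup_castSucc_eq (fun i => tanCone d (ℓ i) (m i))
        (fun i => finrank_tanCone_le hd (ℓ i) (m i)) hdim⟩
  · rintro - ⟨ℓ, m, hfull⟩
    have hrepeat := (Fin.predAbove_surjective (Fin.last k)).iSup_comp
      fun i => tanCone d (ℓ i) (m i)
    exact ⟨fun i => ℓ ((Fin.last k).predAbove i), fun i => m ((Fin.last k).predAbove i),
      hrepeat.trans hfull⟩

/-- Lemma 3.2: a true subabundant statement `T(n,d;s)` implies `T(n,d;s−1)` true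
(and subabundant), and a true superabundant statement `T(n,d;s)` implies
`T(n,d;s+1)` true (and superabundant). -/
theorem sub_super_abundant_monotone (n d s : ℕ) (hn : 1 ≤ n) (hd : 2 ≤ d) (hs : 2 ≤ s) :
    (((2 * n + 1) * s ≤ (n + d).choose d →
      (∃ ℓ m : Fin s → Fin (n + 1) → ℂ,
        Module.finrank ℂ ↥(⨆ i, tanCone d (ℓ i) (m i)) = (2 * n + 1) * s) →
      ∃ ℓ m : Fin (s - 1) → Fin (n + 1) → ℂ,
        Module.finrank ℂ ↥(⨆ i, tanCone d (ℓ i) (m i)) = (2 * n + 1) * (s - 1))) ∧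
    (((n + d).choose d ≤ (2 * n + 1) * s →
      (∃ ℓ m : Fin s → Fin (n + 1) → ℂ,
        (⨆ i, tanCone d (ℓ i) (m i)) = MvPolynomial.homogeneousSubmodule (Fin (n + 1)) ℂ d) →
      ∃ ℓ m : Fin (s + 1) → Fin (n + 1) → ℂ,
        (⨆ i, tanCone d (ℓ i) (m i)) =
          MvPolynomial.homogeneousSubmodule (Fin (n + 1)) ℂ d)) :=
  sub_super_abundant_monotone_general n d s hd hs
end

section
/- Let n ≥ 71. If the statement T(71, 0; 96, 96, 96) is true (in the 72-variable polynomial ring, i.e., with U = ℂ^{72}), then the statement T(n, 0; 96, 96, 96) is true (with U = ℂ^{n+1}). -/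
open MvPolynomial

/-! When every `a_i` is nonzero and `a_1 + a_2 + a_3 ≥ 288`, the expected dimension is all of
`C(n+3,3)`: by inclusion–exclusion the cubic monomials outside every `S_3(U_i)` are those with one
variable in each of the three blocks, and there are `24³ = 48 · 288` of them. So `T` says that `W`
is the whole space of cubics. Extending the points of a witness in `ℂ^{k+1}`, `k ≥ 71`, by zeros
gives a witness in `ℂ^{n+1}`: the new `W` contains the image of the old one, i.e. every cubic
monomial in `x_0, …, x_71`, and every other cubic monomial avoids some block, hence lies in some
`S_3(U_i)`. -/

namespace MvPolynomial

theorem finrank_homogeneousSubmodule {σ K : Type*} [Fintype σ] [DecidableEq σ] [Field K]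
    (n : ℕ) :
    Module.finrank K (homogeneousSubmodule σ K n) = (Fintype.card σ + n - 1).choose n := by
  rw [homogeneousSubmodule_eq_finsupp_supported, ← restrictSupport,
    Module.finrank_eq_nat_card_basis (basisRestrictSupport K _),
    ← Finset.card_univ, ← Finset.card_finsuppAntidiag_nat_eq_choose, ← Nat.card_eq_finsetCard]
  congr
  ext d
  simp [Finsupp.degree_eq_sum]

open scoped Pointwise in
theorem homogeneousSubmodule_three_le {σ R : Type*} [CommSemiring R]
    {W : Submodule R (MvPolynomial σ R)} (hW : ∀ a b c, X a * X b * X c ∈ W) :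
    homogeneousSubmodule σ R 3 ≤ W := by
  rw [← homogeneousSubmodule_one_pow, homogeneousSubmodule_one_eq_span_X, Submodule.span_pow,
    Submodule.span_le, pow_succ, pow_two]
  rintro _ ⟨_, ⟨_, ⟨a, rfl⟩, _, ⟨b, rfl⟩, rfl⟩, _, ⟨c, rfl⟩, rfl⟩
  exact hW a b c

end MvPolynomial

theorem Nat.cast_choose_three_mul_six (m : ℕ) :
    (m.choose 3 : ℤ) * 6 = m * (m - 1) * (m - 2) := by
  rcases Nat.lt_or_ge m 3 with h | h
  · interval_cases m <;> decide
  · obtain ⟨k, rfl⟩ := Nat.exists_eq_add_of_le' h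
    have := Nat.descFactorial_eq_factorial_mul_choose (k + 3) 3
    simp only [Nat.descFactorial_succ, Nat.descFactorial_zero] at this
    push_cast [show k + 3 - 2 = k + 1 by omega, show k + 3 - 1 = k + 2 by omega,
      Nat.factorial] at this ⊢
    linarith

theorem altsum_three_add_cube {n : ℕ} (hn : 69 ≤ n) :
    altsum n 3 + 24 ^ 3 = ((n + 3).choose 3 : ℤ) := by
  obtain ⟨t, rfl⟩ := Nat.exists_eq_add_of_le' hn
  have hsum : altsum (t + 69) 3 = 3 * ((t + 48).choose 3 : ℤ) - 3 * ((t + 24).choose 3 : ℤ)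
      + (t.choose 3 : ℤ) := by
    rw [altsum, Finset.sum_Icc_succ_top (by norm_num), Finset.sum_Icc_succ_top (by norm_num),
      Finset.Icc_self, Finset.sum_singleton, show t + 69 + 3 - 24 * 1 = t + 48 by omega,
      show t + 69 + 3 - 24 * (1 + 1) = t + 24 by omega,
      show t + 69 + 3 - 24 * (1 + 1 + 1) = t by omega]
    simp only [Nat.reduceAdd, Nat.reduceSub, show Nat.choose 3 1 = 3 from rfl,
      show Nat.choose 3 2 = 3 from rfl, Nat.choose_self]
    ring
  have h0 := Nat.cast_choose_three_mul_six (t + 69 + 3)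
  have h1 := Nat.cast_choose_three_mul_six (t + 48)
  have h2 := Nat.cast_choose_three_mul_six (t + 24)
  have h3 := Nat.cast_choose_three_mul_six t
  push_cast at h0 h1 h2
  rw [hsum]
  linarith

theorem kcount_eq_three {a : Fin 3 → ℕ} (ha : ∀ i, a i ≠ 0) : kcount a = 3 := by
  rw [kcount, Finset.filter_true_of_mem fun i _ => ha i, Finset.card_univ, Fintype.card_fin]

theorem expdimZ_eq_choose {n s : ℕ} {a : Fin 3 → ℕ} (hn : 69 ≤ n) (ha : ∀ i, a i ≠ 0)
    (hsum : 288 ≤ a 0 + a 1 + a 2) : expdimZ n s a = ((n + 3).choose 3 : ℤ) := by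
  rw [expdimZ, kcount_eq_three ha, ← altsum_three_add_cube hn]
  exact min_eq_right (by push_cast; nlinarith)

theorem lin_single {n : ℕ} (a : Fin (n + 1)) : lin (Pi.single a 1) = X a := by
  simp [lin, Pi.single_apply]

theorem isHomogeneous_lin {n : ℕ} (v : Fin (n + 1) → ℂ) : (lin v).IsHomogeneous 1 :=
  IsHomogeneous.sum _ _ _ fun j _ => isHomogeneous_C_mul_X (v j) j

theorem mulU_le_homogeneousSubmodule {n d : ℕ} {f : MvPolynomial (Fin (n + 1)) ℂ}
    (hf : f.IsHomogeneous d) : mulU f ≤ homogeneousSubmodule (Fin (n + 1)) ℂ (d + 1) := by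
  rw [mulU, Submodule.span_le]
  rintro _ ⟨j, rfl⟩
  exact hf.mul (isHomogeneous_X ℂ j)

theorem tanCone_le_homogeneousSubmodule {n d : ℕ} (hd : 2 ≤ d) (ℓ m : Fin (n + 1) → ℂ) :
    tanCone d ℓ m ≤ homogeneousSubmodule (Fin (n + 1)) ℂ d := by
  obtain ⟨e, rfl⟩ := Nat.exists_eq_add_of_le' hd
  refine sup_le (mulU_le_homogeneousSubmodule ?_) (mulU_le_homogeneousSubmodule ?_)
  · simpa using (isHomogeneous_lin ℓ).pow (e + 1)
  · simpa using ((isHomogeneous_lin ℓ).pow e).mul (isHomogeneous_lin m)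

theorem S3U_le_homogeneousSubmodule {n : ℕ} (i : Fin 3) :
    S3U i ≤ homogeneousSubmodule (Fin (n + 1)) ℂ 3 := by
  rw [S3U, Submodule.span_le]
  rintro _ ⟨a, b, c, -, -, -, rfl⟩
  exact ((isHomogeneous_lin a).mul (isHomogeneous_lin b)).mul (isHomogeneous_lin c)

theorem Wspace_le_homogeneousSubmodule {n s : ℕ} {a : Fin 3 → ℕ}
    (ℓ m : Fin s → Fin (n + 1) → ℂ) (ℓ' m' : (i : Fin 3) → Fin (a i) → Fin (n + 1) → ℂ) :
    Wspace ℓ m ℓ' m' ≤ homogeneousSubmodule (Fin (n + 1)) ℂ 3 :=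
  sup_le (iSup_le fun i => sup_le (S3U_le_homogeneousSubmodule i.1)
      (iSup_le fun _ => tanCone_le_homogeneousSubmodule (by norm_num) _ _))
    (iSup_le fun _ => tanCone_le_homogeneousSubmodule (by norm_num) _ _)

theorem S3U_le_Wspace {n s : ℕ} {a : Fin 3 → ℕ} {i : Fin 3} (hi : a i ≠ 0)
    (ℓ m : Fin s → Fin (n + 1) → ℂ) (ℓ' m' : (i : Fin 3) → Fin (a i) → Fin (n + 1) → ℂ) :
    S3U i ≤ Wspace ℓ m ℓ' m' :=
  le_sup_of_le_left (le_iSup_of_le (⟨i, hi⟩ : {i : Fin 3 // a i ≠ 0}) le_sup_left)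

theorem memU_single_one {n : ℕ} {i : Fin 3} {a : Fin (n + 1)} (ha : (a : ℕ) / 24 ≠ i) :
    memU i (Pi.single a (1 : ℂ)) := by
  intro j h₁ h₂
  exact Pi.single_eq_of_ne (fun h => ha (by subst h; omega)) 1

theorem X_mul_X_mul_X_mem_S3U {n : ℕ} {i : Fin 3} {a b c : Fin (n + 1)}
    (ha : (a : ℕ) / 24 ≠ i) (hb : (b : ℕ) / 24 ≠ i) (hc : (c : ℕ) / 24 ≠ i) :
    X a * X b * X c ∈ S3U i :=
  Submodule.subset_span ⟨_, _, _, memU_single_one ha, memU_single_one hb, memU_single_one hc,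
    by rw [lin_single, lin_single, lin_single]⟩

section Padding

variable {k n : ℕ} (h : k ≤ n)

noncomputable def padZeros (v : Fin (k + 1) → ℂ) : Fin (n + 1) → ℂ :=
  Function.extend (Fin.castLE (Nat.succ_le_succ h)) v 0

theorem rename_castLE_lin (v : Fin (k + 1) → ℂ) :
    rename (Fin.castLE (Nat.succ_le_succ h)) (lin v) = lin (padZeros h v) := by
  simp only [lin, map_sum, map_mul, rename_C, rename_X]
  refine Fintype.sum_of_injective (Fin.castLE (Nat.succ_le_succ h)) (Fin.castLE_injective _)
    _ _ (fun j hj => ?_) fun i => ?_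
  · rw [padZeros, Function.extend_apply' _ _ _ fun ⟨i, hi⟩ => hj ⟨i, hi⟩, Pi.zero_apply,
      map_zero, zero_mul]
  · rw [padZeros, (Fin.castLE_injective _).extend_apply]

theorem memU_padZeros {i : Fin 3} {v : Fin (k + 1) → ℂ} (hv : memU i v) :
    memU i (padZeros h v) := by
  intro j h₁ h₂
  by_cases hj : ∃ j', Fin.castLE (Nat.succ_le_succ h) j' = j
  · obtain ⟨j', rfl⟩ := hj
    rw [padZeros, (Fin.castLE_injective _).extend_apply]
    exact hv j' h₁ h₂
  · rw [padZeros, Function.extend_apply' _ _ _ hj, Pi.zero_apply]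

theorem map_mulU_le (f : MvPolynomial (Fin (k + 1)) ℂ) :
    (mulU f).map (rename (Fin.castLE (Nat.succ_le_succ h))).toLinearMap ≤
      mulU (rename (Fin.castLE (Nat.succ_le_succ h)) f) := by
  rw [mulU, Submodule.map_span, Submodule.span_le]
  rintro _ ⟨_, ⟨j, rfl⟩, rfl⟩
  exact Submodule.subset_span ⟨Fin.castLE (Nat.succ_le_succ h) j, by simp⟩

theorem map_tanCone_le (d : ℕ) (ℓ m : Fin (k + 1) → ℂ) :
    (tanCone d ℓ m).map (rename (Fin.castLE (Nat.succ_le_succ h))).toLinearMap ≤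
      tanCone d (padZeros h ℓ) (padZeros h m) := by
  rw [tanCone, Submodule.map_sup]
  refine sup_le ((map_mulU_le h _).trans ?_) ((map_mulU_le h _).trans ?_)
  · rw [map_pow, rename_castLE_lin]
    exact le_sup_left
  · rw [map_mul, map_pow, rename_castLE_lin, rename_castLE_lin]
    exact le_sup_right

theorem map_S3U_le (i : Fin 3) :
    (S3U i).map (rename (Fin.castLE (Nat.succ_le_succ h))).toLinearMap ≤ S3U i := by
  rw [S3U, Submodule.map_span, Submodule.span_le]
  rintro _ ⟨_, ⟨a, b, c, ha, hb, hc, rfl⟩, rfl⟩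
  refine Submodule.subset_span ⟨_, _, _, memU_padZeros h ha, memU_padZeros h hb,
    memU_padZeros h hc, ?_⟩
  rw [AlgHom.toLinearMap_apply, map_mul, map_mul, rename_castLE_lin, rename_castLE_lin,
    rename_castLE_lin]

theorem map_Wspace_le {s : ℕ} {a : Fin 3 → ℕ} (ℓ m : Fin s → Fin (k + 1) → ℂ)
    (ℓ' m' : (i : Fin 3) → Fin (a i) → Fin (k + 1) → ℂ) :
    (Wspace ℓ m ℓ' m').map (rename (Fin.castLE (Nat.succ_le_succ h))).toLinearMap ≤
      Wspace (fun r => padZeros h (ℓ r)) (fun r => padZeros h (m r))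
        (fun i j => padZeros h (ℓ' i j)) (fun i j => padZeros h (m' i j)) := by
  simp only [Wspace, Submodule.map_sup, Submodule.map_iSup]
  refine sup_le_sup (iSup_mono fun i => sup_le_sup (map_S3U_le h i.1) ?_) ?_ <;>
    exact iSup_mono fun j => map_tanCone_le h 3 _ _

end Padding

theorem finrank_Wspace_eq_choose_iff {n s : ℕ} {a : Fin 3 → ℕ}
    (ℓ m : Fin s → Fin (n + 1) → ℂ) (ℓ' m' : (i : Fin 3) → Fin (a i) → Fin (n + 1) → ℂ) :
    (Module.finrank ℂ (Wspace ℓ m ℓ' m') : ℤ) = ((n + 3).choose 3 : ℤ) ↔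
      Wspace ℓ m ℓ' m' = homogeneousSubmodule (Fin (n + 1)) ℂ 3 := by
  have hfinrank :
      Module.finrank ℂ (homogeneousSubmodule (Fin (n + 1)) ℂ 3) = (n + 3).choose 3 := by
    rw [finrank_homogeneousSubmodule, Fintype.card_fin, Nat.add_right_comm, Nat.add_sub_cancel]
  have : FiniteDimensional ℂ (homogeneousSubmodule (Fin (n + 1)) ℂ 3) :=
    Module.Finite.iff_fg.mpr (homogeneousSubmodule_fg _ _ 3)
  refine ⟨fun hW => Submodule.eq_of_le_of_finrank_eq (Wspace_le_homogeneousSubmodule _ _ _ _)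
    (by rw [hfinrank]; exact_mod_cast hW), fun hW => by rw [hW, hfinrank]⟩

theorem Wspace_padZeros_eq_homogeneousSubmodule {k n s : ℕ} {a : Fin 3 → ℕ} (hk : 71 ≤ k)
    (h : k ≤ n) (ha : ∀ i, a i ≠ 0)
    (ℓ m : Fin s → Fin (k + 1) → ℂ) (ℓ' m' : (i : Fin 3) → Fin (a i) → Fin (k + 1) → ℂ)
    (hW : Wspace ℓ m ℓ' m' = homogeneousSubmodule (Fin (k + 1)) ℂ 3) :
    Wspace (fun r => padZeros h (ℓ r)) (fun r => padZeros h (m r))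
        (fun i j => padZeros h (ℓ' i j)) (fun i j => padZeros h (m' i j)) =
      homogeneousSubmodule (Fin (n + 1)) ℂ 3 := by
  refine le_antisymm (Wspace_le_homogeneousSubmodule _ _ _ _)
    (homogeneousSubmodule_three_le fun x y z => ?_)
  by_cases hS : ∃ i : Fin 3, (x : ℕ) / 24 ≠ i ∧ (y : ℕ) / 24 ≠ i ∧ (z : ℕ) / 24 ≠ i
  · obtain ⟨i, hx, hy, hz⟩ := hS
    exact S3U_le_Wspace (ha i) _ _ _ _ (X_mul_X_mul_X_mem_S3U hx hy hz)
  -- each of the three blocks is hit by one of `x`, `y`, `z`, so all three are below `72`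
  push Not at hS
  have h0 := hS 0
  have h1 := hS 1
  have h2 := hS 2
  simp only [Fin.val_zero, Fin.val_one, Fin.val_two] at h0 h1 h2
  have hx : (x : ℕ) < k + 1 := by omega
  have hy : (y : ℕ) < k + 1 := by omega
  have hz : (z : ℕ) < k + 1 := by omega
  have hxyz : X x * X y * X z = rename (Fin.castLE (Nat.succ_le_succ h))
      (X ⟨x, hx⟩ * X ⟨y, hy⟩ * X ⟨z, hz⟩ : MvPolynomial (Fin (k + 1)) ℂ) := by
    simp only [map_mul, rename_X]
    rfl
  rw [hxyz]
  refine map_Wspace_le h ℓ m ℓ' m' (Submodule.mem_map_of_mem ?_)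
  rw [hW]
  exact ((isHomogeneous_X ℂ _).mul (isHomogeneous_X ℂ _)).mul (isHomogeneous_X ℂ _)

theorem TStmt.of_le {k n s : ℕ} {a : Fin 3 → ℕ} (hk : 71 ≤ k) (h : k ≤ n) (ha : ∀ i, a i ≠ 0)
    (hsum : 288 ≤ a 0 + a 1 + a 2) (hT : TStmt k s a) : TStmt n s a := by
  obtain ⟨ℓ, m, ℓ', m', hmem, hrank⟩ := hT
  rw [expdimZ_eq_choose (by omega) ha hsum, finrank_Wspace_eq_choose_iff] at hrank
  refine ⟨fun r => padZeros h (ℓ r), fun r => padZeros h (m r),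
    fun i j => padZeros h (ℓ' i j), fun i j => padZeros h (m' i j),
    fun i j => ⟨memU_padZeros h (hmem i j).1, memU_padZeros h (hmem i j).2⟩, ?_⟩
  rw [expdimZ_eq_choose (by omega) ha hsum, finrank_Wspace_eq_choose_iff]
  exact Wspace_padZeros_eq_homogeneousSubmodule hk h ha ℓ m ℓ' m' hrank

/-- Proposition 3.7 (iv): for `n ≥ 71`, truth of `T(71, 0; 96, 96, 96)` implies truth of
`T(n, 0; 96, 96, 96)`. -/
theorem induction_step_iv (n : ℕ) (hn : 71 ≤ n)
    (h71 : TStmt 71 0 ![96, 96, 96]) :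
    TStmt n 0 ![96, 96, 96] :=
  h71.of_le le_rfl hn (by decide) (by decide)
end

section
/- Let n ≥ 1, d ≥ 2, and let ℓ, m ∈ U = ℂ^{n+1} be linearly independent. Then dim_ℂ ( ℓ^{d−1}·U + ℓ^{d−2}·m·U ) = 2n + 1; i.e., the affine cone over the tangent space to the tangential variety T_{n,d} at the point [ℓ^{d−1}m] has dimension 2n+1, so T_{n,d} has dimension 2n. -/
open MvPolynomial

/-!
The cone is the image of `U × U` under `(u, v) ↦ ℓ^{d-2} (ℓ u + m v)`. Since the polynomial
ring is a domain, the kernel consists of the syzygies `ℓ u + m v = 0` of the two independent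
linear forms, and these are exactly the multiples of the Koszul syzygy `(m, -ℓ)`: evaluating
and polarizing the quadratic form `ℓ u + m v` at vectors dual to `ℓ, m` pins down `u` and `v`.
Rank–nullity then gives `2 (n + 1) - 1`.
-/

open MvPolynomial Matrix Module

theorem exists_dotProduct_eq_of_linearIndependent {K ι κ : Type*} [Field K] [Fintype ι]
    [Fintype κ] {v : κ → ι → K} (hv : LinearIndependent K v) (c : κ → K) :
    ∃ w, ∀ i, v i ⬝ᵥ w = c i := by
  set M : Matrix κ ι K := Matrix.of v
  have hrange : LinearMap.range M.mulVecLin = ⊤ :=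
    Submodule.eq_top_of_finrank_eq <| by
      rw [← Matrix.rank, hv.rank_matrix (M := M), finrank_fintype_fun_eq_card]
  obtain ⟨w, hw⟩ := LinearMap.range_eq_top.mp hrange c
  exact ⟨w, fun i => congrFun hw i⟩

section

variable {n : ℕ}

theorem eval_lin (w a : Fin (n + 1) → ℂ) : eval w (lin a) = a ⬝ᵥ w := by
  simp [lin, dotProduct]

theorem lin_ne_zero {a : Fin (n + 1) → ℂ} (ha : a ≠ 0) : lin a ≠ 0 := fun h0 =>
  ha <| funext fun k => by simpa [eval_lin] using congrArg (eval (Pi.single k 1)) h0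

noncomputable def linMap (n : ℕ) : (Fin (n + 1) → ℂ) →ₗ[ℂ] MvPolynomial (Fin (n + 1)) ℂ where
  toFun := lin
  map_add' a b := by simp [lin, ← Finset.sum_add_distrib, add_mul]
  map_smul' c a := by simp [lin, Finset.smul_sum, smul_eq_C_mul, mul_assoc]

@[simp] theorem linMap_apply (a : Fin (n + 1) → ℂ) : linMap n a = lin a := rfl

theorem mulU_eq_range (f : MvPolynomial (Fin (n + 1)) ℂ) :
    mulU f = LinearMap.range (LinearMap.mulLeft ℂ f ∘ₗ linMap n) := by
  apply le_antisymm
  · rw [mulU, Submodule.span_le]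
    rintro _ ⟨j, rfl⟩
    refine ⟨Pi.single j 1, ?_⟩
    simp [lin, Pi.single_apply]
  · rintro _ ⟨a, rfl⟩
    simp only [LinearMap.coe_comp, Function.comp_apply, LinearMap.mulLeft_apply, linMap_apply,
      lin, Finset.mul_sum]
    refine Submodule.sum_mem _ fun j _ => ?_
    rw [mul_left_comm, ← smul_eq_C_mul]
    exact Submodule.smul_mem _ _ (Submodule.subset_span (Set.mem_range_self j))

theorem exists_eq_smul_of_lin_mul_add_lin_mul_eq_zero {ℓ m u v : Fin (n + 1) → ℂ}
    (h : LinearIndependent ℂ ![ℓ, m]) (hsyz : lin ℓ * lin u + lin m * lin v = 0) :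
    ∃ c : ℂ, u = c • m ∧ v = -c • ℓ := by
  have hq : ∀ w, ℓ ⬝ᵥ w * u ⬝ᵥ w + m ⬝ᵥ w * v ⬝ᵥ w = 0 := fun w => by
    simpa [eval_lin] using congrArg (eval w) hsyz
  have hpolar : ∀ w w', ℓ ⬝ᵥ w * u ⬝ᵥ w' + ℓ ⬝ᵥ w' * u ⬝ᵥ w +
      m ⬝ᵥ w * v ⬝ᵥ w' + m ⬝ᵥ w' * v ⬝ᵥ w = 0 := fun w w' => by
    have := hq (w + w')
    simp only [dotProduct_add] at this
    linear_combination this - hq w - hq w'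
  obtain ⟨w₁, hw₁⟩ := exists_dotProduct_eq_of_linearIndependent h ![1, 0]
  obtain ⟨w₂, hw₂⟩ := exists_dotProduct_eq_of_linearIndependent h ![0, 1]
  simp only [Fin.forall_fin_two, Matrix.cons_val_zero, Matrix.cons_val_one] at hw₁ hw₂
  have hu₁ : u ⬝ᵥ w₁ = 0 := by simpa [hw₁] using hq w₁
  have hv₂ : v ⬝ᵥ w₂ = 0 := by simpa [hw₂] using hq w₂
  have hmix : u ⬝ᵥ w₂ + v ⬝ᵥ w₁ = 0 := by simpa [hw₁, hw₂] using hpolar w₁ w₂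
  refine ⟨u ⬝ᵥ w₂, funext fun k => ?_, funext fun k => ?_⟩
  · have := hpolar w₁ (Pi.single k 1)
    simp only [hw₁, hu₁, dotProduct_single_one] at this
    simp only [Pi.smul_apply, smul_eq_mul]
    linear_combination this - m k * hmix
  · have := hpolar w₂ (Pi.single k 1)
    simp only [hw₂, hv₂, dotProduct_single_one] at this
    simp only [Pi.smul_apply, smul_eq_mul]
    linear_combination this

noncomputable def tanMap (d : ℕ) (ℓ m : Fin (n + 1) → ℂ) :
    (Fin (n + 1) → ℂ) × (Fin (n + 1) → ℂ) →ₗ[ℂ] MvPolynomial (Fin (n + 1)) ℂ :=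
  (LinearMap.mulLeft ℂ (lin ℓ ^ (d - 1)) ∘ₗ linMap n).coprod
    (LinearMap.mulLeft ℂ (lin ℓ ^ (d - 2) * lin m) ∘ₗ linMap n)

theorem range_tanMap (d : ℕ) (ℓ m : Fin (n + 1) → ℂ) :
    LinearMap.range (tanMap d ℓ m) = tanCone d ℓ m := by
  rw [tanMap, LinearMap.range_coprod, tanCone, mulU_eq_range, mulU_eq_range]

theorem tanMap_apply {d : ℕ} (hd : 2 ≤ d) (ℓ m u v : Fin (n + 1) → ℂ) :
    tanMap d ℓ m (u, v) = lin ℓ ^ (d - 2) * (lin ℓ * lin u + lin m * lin v) := by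
  simp only [tanMap, LinearMap.coprod_apply, LinearMap.comp_apply, LinearMap.mulLeft_apply,
    linMap_apply]
  rw [show d - 1 = d - 2 + 1 by omega, pow_succ]
  ring

theorem ker_tanMap {d : ℕ} (hd : 2 ≤ d) {ℓ m : Fin (n + 1) → ℂ}
    (h : LinearIndependent ℂ ![ℓ, m]) :
    LinearMap.ker (tanMap d ℓ m) = ℂ ∙ (m, -ℓ) := by
  have hℓ : lin ℓ ^ (d - 2) ≠ 0 := pow_ne_zero _ (lin_ne_zero (h.ne_zero 0))
  ext ⟨u, v⟩
  rw [LinearMap.mem_ker, tanMap_apply hd, mul_eq_zero, or_iff_right hℓ,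
    Submodule.mem_span_singleton]
  constructor
  · intro hsyz
    obtain ⟨c, rfl, rfl⟩ := exists_eq_smul_of_lin_mul_add_lin_mul_eq_zero h hsyz
    exact ⟨c, by simp⟩
  · rintro ⟨c, hc⟩
    obtain ⟨rfl, rfl⟩ := Prod.mk.inj hc.symm
    simp only [← linMap_apply, map_smul, map_neg, smul_eq_C_mul]
    ring

end

theorem tanCone_dim_general (n d : ℕ) (hd : 2 ≤ d)
    (ℓ m : Fin (n + 1) → ℂ) (h : LinearIndependent ℂ ![ℓ, m]) :
    Module.finrank ℂ (tanCone d ℓ m) = 2 * n + 1 := by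
  have hsyz : ((m, -ℓ) : (Fin (n + 1) → ℂ) × (Fin (n + 1) → ℂ)) ≠ 0 :=
    fun h0 => h.ne_zero 1 (congrArg Prod.fst h0)
  have hrank := (tanMap d ℓ m).finrank_range_add_finrank_ker
  rw [range_tanMap, ker_tanMap hd h, finrank_span_singleton hsyz, finrank_prod,
    finrank_fin_fun] at hrank
  omega

/-- The affine cone `ℓ^{d−1}·U + ℓ^{d−2}·m·U` over the tangent space to `T_{n,d}` at
`[ℓ^{d−1} m]`, with `ℓ, m` linearly independent, has dimension `2n + 1`. -/
theorem tanCone_dim (n d : ℕ) (hn : 1 ≤ n) (hd : 2 ≤ d)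
    (ℓ m : Fin (n + 1) → ℂ) (h : LinearIndependent ℂ ![ℓ, m]) :
    Module.finrank ℂ (tanCone d ℓ m) = 2 * n + 1 :=
  tanCone_dim_general n d hd ℓ m h
end
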